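/- arXiv:2209.02690 — 2 statements merged into one kernel-verified Lean document; each statement's English description precedes it below -/
import Mathlib

section
/- Let $S_+, S_-$ be finite strictly linearly separable subsets of $\mathbb{R}^n$ and define $A_-^* = \{y^* \in S_- : \exists (c,d),\ c^T y^* + d = 0,\ c^T y + d < 0\ \forall y \in S_- \setminus \{y^*\},\ c^T x + d > 0\ \forall x \in S_+\}$. Then for every point $z \in S_- \setminus A_-^*$, every affine classifier $(c,d)$ with $c^T x + d > 0$ on $S_+$ and $c^T y + d \le 0$ on $A_-^*$ satisfies $c^T z + d \le 0$; i.e., disclosing only $A_-^*$ as negatives leaks no additional negative point. -/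
/-- The leak set: points of the sample `S₊ ∪ S₋` classified positive by some affine
classifier strictly consistent with disclosed positives `A₊` and negatives `A₋`. -/
def Leak (n : ℕ) (Sp Sm Ap Am : Finset (Fin n → ℝ)) : Set (Fin n → ℝ) :=
  {z ∈ (↑Sp ∪ ↑Sm : Set (Fin n → ℝ)) | ∃ (c : Fin n → ℝ) (d : ℝ),
    (∀ x ∈ Ap, (∑ i, c i * x i) + d > 0) ∧ (∀ y ∈ Am, (∑ i, c i * y i) + d < 0) ∧
    (∑ i, c i * z i) + d > 0}

/-- Strict linear separability of `(S₊, S₋)`. -/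
def StrictSep (n : ℕ) (Sp Sm : Finset (Fin n → ℝ)) : Prop :=
  ∃ (c : Fin n → ℝ) (d : ℝ),
    (∀ x ∈ Sp, (∑ i, c i * x i) + d > 0) ∧ (∀ y ∈ Sm, (∑ i, c i * y i) + d < 0)

/-- The critical negative points `A₋*`. -/
def CritMinus (n : ℕ) (Sp Sm : Finset (Fin n → ℝ)) : Set (Fin n → ℝ) :=
  {ys ∈ (Sm : Set (Fin n → ℝ)) | ∃ (c : Fin n → ℝ) (d : ℝ), (∑ i, c i * ys i) + d = 0 ∧
    (∀ y ∈ Sm, y ≠ ys → (∑ i, c i * y i) + d < 0) ∧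
    (∀ x ∈ Sp, (∑ i, c i * x i) + d > 0)}

/-- The critical positive points `A₊*`. -/
def CritPlus (n : ℕ) (Sp Sm : Finset (Fin n → ℝ)) : Set (Fin n → ℝ) :=
  {xs ∈ (Sp : Set (Fin n → ℝ)) | ∃ (c : Fin n → ℝ) (d : ℝ), (∑ i, c i * xs i) + d = 0 ∧
    (∀ x ∈ Sp, x ≠ xs → (∑ i, c i * x i) + d > 0) ∧
    (∀ y ∈ Sm, (∑ i, c i * y i) + d < 0)}

/-!
Suppose a classifier `f` positive on `S₊` and non-positive on `A₋*` were positive at some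
`z ∈ S₋`, and let `f₀` strictly separate `S₊` from `S₋`. Moving along `f₀ + s f` from `s = 0`
and stopping at the first `s > 0` at which some point of `S₋` reaches the hyperplane gives a
classifier positive on `S₊`, non-positive on `S₋`, and vanishing somewhere on `S₋`. Tilting it
slightly about a coordinate strictly shrinks its zero set inside `S₋` while keeping it
non-empty, so after finitely many tilts the zero set is a single point, which lies in `A₋*`.
But `f₀ + s f` is negative on `A₋*`, while it vanishes at that point.
-/

open Matrix Filter Topology

namespace AffineClassifier

variable {n : ℕ}

lemma exists_pos_forall_mul_abs_lt {α : Type*} (F : Finset α) (f h : α → ℝ) :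
    ∃ ε > 0, ∀ w ∈ F, f w ≠ 0 → ε * |h w| < |f w| := by
  have hsmall : ∀ w ∈ F, ∀ᶠ ε in 𝓝[>] (0 : ℝ), f w ≠ 0 → ε * |h w| < |f w| := by
    intro w _
    by_cases hw : f w = 0
    · exact Eventually.of_forall fun _ h => absurd hw h
    have hlim : Tendsto (fun ε => ε * |h w|) (𝓝[>] (0 : ℝ)) (𝓝 0) := by
      simpa using ((continuous_id.mul_const |h w|).tendsto 0).mono_left nhdsWithin_le_nhds
    exact (hlim.eventually (gt_mem_nhds (abs_pos.2 hw))).mono fun _ h _ => h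
  obtain ⟨ε, hε, hF⟩ :=
    (eventually_mem_nhdsWithin.and ((eventually_all_finset F).2 hsmall)).exists
  exact ⟨ε, hε, hF⟩

lemma dotProduct_add_smul_add (c₀ c w : Fin n → ℝ) (d₀ d s : ℝ) :
    (c₀ + s • c) ⬝ᵥ w + (d₀ + s * d) = (c₀ ⬝ᵥ w + d₀) + s * (c ⬝ᵥ w + d) := by
  simp only [add_dotProduct, smul_dotProduct, smul_eq_mul]
  ring

noncomputable def zeroSet (S : Finset (Fin n → ℝ)) (c : Fin n → ℝ) (d : ℝ) :
    Finset (Fin n → ℝ) :=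
  S.filter fun y => c ⬝ᵥ y + d = 0

lemma mem_zeroSet {S : Finset (Fin n → ℝ)} {c : Fin n → ℝ} {d : ℝ} {y : Fin n → ℝ} :
    y ∈ zeroSet S c d ↔ y ∈ S ∧ c ⬝ᵥ y + d = 0 :=
  Finset.mem_filter

def WeaklySeparates (Sp Sm : Finset (Fin n → ℝ)) (c : Fin n → ℝ) (d : ℝ) : Prop :=
  (∀ x ∈ Sp, 0 < c ⬝ᵥ x + d) ∧ ∀ y ∈ Sm, c ⬝ᵥ y + d ≤ 0

lemma mem_critMinus_of_zeroSet_subsingleton {Sp Sm : Finset (Fin n → ℝ)} {c : Fin n → ℝ}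
    {d : ℝ} {ys : Fin n → ℝ} (hsep : WeaklySeparates Sp Sm c d) (hys : ys ∈ zeroSet Sm c d)
    (hsub : (zeroSet Sm c d : Set (Fin n → ℝ)).Subsingleton) : ys ∈ CritMinus n Sp Sm := by
  refine ⟨(mem_zeroSet.1 hys).1, c, d, (mem_zeroSet.1 hys).2, fun y hy hne => ?_, hsep.1⟩
  refine (hsep.2 y hy).lt_of_ne fun hy0 => hne ?_
  exact hsub (mem_zeroSet.2 ⟨hy, hy0⟩) hys

/-- Tilting a weak separator about coordinate `i`, pivoting at the largest `i`-th coordinate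
`m` of its zero set, keeps only the zeros with `i`-th coordinate `m`. -/
lemma exists_zeroSet_ssubset {Sp Sm : Finset (Fin n → ℝ)} {c : Fin n → ℝ} {d : ℝ}
    (hsep : WeaklySeparates Sp Sm c d) {y₀ y₁ : Fin n → ℝ} (h₀ : y₀ ∈ zeroSet Sm c d)
    (h₁ : y₁ ∈ zeroSet Sm c d) (hne : y₀ ≠ y₁) :
    ∃ c' d', WeaklySeparates Sp Sm c' d' ∧ (zeroSet Sm c' d').Nonempty ∧
      zeroSet Sm c' d' ⊂ zeroSet Sm c d := by
  classical
  obtain ⟨i, hi⟩ := Function.ne_iff.1 hne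
  set T := zeroSet Sm c d
  set m := T.sup' ⟨y₀, h₀⟩ (· i)
  obtain ⟨ε, hε, hsmall⟩ :=
    exists_pos_forall_mul_abs_lt (Sp ∪ Sm) (fun w => c ⬝ᵥ w + d) (fun w => w i - m)
  have heval (w : Fin n → ℝ) :
      (c + ε • Pi.single i 1) ⬝ᵥ w + (d + ε * -m) = (c ⬝ᵥ w + d) + ε * (w i - m) := by
    rw [dotProduct_add_smul_add, single_one_dotProduct, sub_eq_add_neg]
  have hneg : ∀ y ∈ Sm, c ⬝ᵥ y + d < 0 → (c + ε • Pi.single i 1) ⬝ᵥ y + (d + ε * -m) < 0 := by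
    intro y hy hlt
    have := hsmall y (Finset.mem_union_right _ hy) hlt.ne
    rw [abs_of_neg hlt] at this
    rw [heval]
    nlinarith [le_abs_self (y i - m)]
  have hzero : ∀ y ∈ T, (c + ε • Pi.single i 1) ⬝ᵥ y + (d + ε * -m) = ε * (y i - m) := by
    intro y hy
    rw [heval, (mem_zeroSet.1 hy).2, zero_add]
  have hle : ∀ y ∈ T, y i ≤ m := fun y hy => T.le_sup' (· i) hy
  refine ⟨c + ε • Pi.single i 1, d + ε * -m, ⟨fun x hx => ?_, fun y hy => ?_⟩, ?_, ?_⟩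
  · have hpos := hsep.1 x hx
    have := hsmall x (Finset.mem_union_left _ hx) hpos.ne'
    rw [abs_of_pos hpos] at this
    rw [heval]
    nlinarith [neg_abs_le (x i - m)]
  · rcases (hsep.2 y hy).lt_or_eq with hlt | heq
    · exact (hneg y hy hlt).le
    · rw [hzero y (mem_zeroSet.2 ⟨hy, heq⟩)]
      nlinarith [hle y (mem_zeroSet.2 ⟨hy, heq⟩)]
  · obtain ⟨y₂, hy₂, hm⟩ := T.exists_mem_eq_sup' ⟨y₀, h₀⟩ (· i)
    refine ⟨y₂, mem_zeroSet.2 ⟨(mem_zeroSet.1 hy₂).1, ?_⟩⟩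
    rw [hzero y₂ hy₂, ← hm, sub_self, mul_zero]
  · have hsub : zeroSet Sm (c + ε • Pi.single i 1) (d + ε * -m) ⊆ T := by
      intro y hy
      obtain ⟨hySm, hy0⟩ := mem_zeroSet.1 hy
      refine mem_zeroSet.2 ⟨hySm, (hsep.2 y hySm).antisymm ?_⟩
      exact not_lt.1 fun hlt => (hneg y hySm hlt).ne hy0
    have hcoord : ∀ y ∈ T, y ∈ zeroSet Sm (c + ε • Pi.single i 1) (d + ε * -m) → y i = m := by
      intro y hyT hy
      have := (mem_zeroSet.1 hy).2
      rw [hzero y hyT] at this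
      linarith [(mul_eq_zero.1 this).resolve_left hε.ne']
    refine (Finset.ssubset_iff_of_subset hsub).2 ?_
    by_contra! hall
    exact hi ((hcoord y₀ h₀ (hall y₀ h₀)).trans (hcoord y₁ h₁ (hall y₁ h₁)).symm)

lemma exists_mem_zeroSet_mem_critMinus {Sp Sm : Finset (Fin n → ℝ)} {c : Fin n → ℝ} {d : ℝ}
    (hsep : WeaklySeparates Sp Sm c d) (hT : (zeroSet Sm c d).Nonempty) :
    ∃ ys ∈ zeroSet Sm c d, ys ∈ CritMinus n Sp Sm := by
  induction hk : (zeroSet Sm c d).card using Nat.strong_induction_on generalizing c d with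
  | _ k ih =>
    by_cases hnt : (zeroSet Sm c d).Nontrivial
    · obtain ⟨y₀, h₀, y₁, h₁, hne⟩ := hnt
      obtain ⟨c', d', hsep', hT', hssub⟩ := exists_zeroSet_ssubset hsep h₀ h₁ hne
      obtain ⟨ys, hys, hcrit⟩ := ih _ (hk ▸ Finset.card_lt_card hssub) hsep' hT' rfl
      exact ⟨ys, hssub.subset hys, hcrit⟩
    · obtain ⟨ys, hys⟩ := hT
      exact ⟨ys, hys,
        mem_critMinus_of_zeroSet_subsingleton hsep hys (Set.not_nontrivial_iff.1 hnt)⟩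

/-- `s` is the first time at which `f₀ + s f` reaches zero on `S₋`. -/
lemma exists_weaklySeparates_add_smul {Sp Sm : Finset (Fin n → ℝ)} {c₀ c : Fin n → ℝ}
    {d₀ d : ℝ} (hpos₀ : ∀ x ∈ Sp, 0 < c₀ ⬝ᵥ x + d₀) (hneg₀ : ∀ y ∈ Sm, c₀ ⬝ᵥ y + d₀ < 0)
    (hpos : ∀ x ∈ Sp, 0 < c ⬝ᵥ x + d) {z : Fin n → ℝ} (hz : z ∈ Sm) (hfz : 0 < c ⬝ᵥ z + d) :
    ∃ s > 0, WeaklySeparates Sp Sm (c₀ + s • c) (d₀ + s * d) ∧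
      (zeroSet Sm (c₀ + s • c) (d₀ + s * d)).Nonempty := by
  set f₀ := fun w => c₀ ⬝ᵥ w + d₀
  set f := fun w => c ⬝ᵥ w + d
  set B := Sm.filter fun y => 0 < f y
  have hB : B.Nonempty := ⟨z, Finset.mem_filter.2 ⟨hz, hfz⟩⟩
  have hratio : ∀ y ∈ B, 0 < -f₀ y / f y := fun y hy =>
    div_pos (neg_pos.2 (hneg₀ y (Finset.mem_filter.1 hy).1)) (Finset.mem_filter.1 hy).2
  obtain ⟨y₀, hy₀, hs⟩ := B.exists_mem_eq_inf' hB fun y => -f₀ y / f y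
  set s := B.inf' hB fun y => -f₀ y / f y
  obtain ⟨hy₀Sm, hfy₀⟩ := Finset.mem_filter.1 hy₀
  have hspos : 0 < s := hs ▸ hratio y₀ hy₀
  refine ⟨s, hspos, ⟨fun x hx => ?_, fun y hy => ?_⟩, y₀, mem_zeroSet.2 ⟨hy₀Sm, ?_⟩⟩
  · rw [dotProduct_add_smul_add]
    exact add_pos (hpos₀ x hx) (mul_pos hspos (hpos x hx))
  · rw [dotProduct_add_smul_add]
    by_cases hfy : 0 < f y
    · have hle : s ≤ -f₀ y / f y := B.inf'_le _ (Finset.mem_filter.2 ⟨hy, hfy⟩)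
      have := (le_div_iff₀ hfy).1 hle
      change f₀ y + s * f y ≤ 0
      linarith
    · nlinarith [hneg₀ y hy]
  · rw [dotProduct_add_smul_add, hs]
    change f₀ y₀ + -f₀ y₀ / f y₀ * f y₀ = 0
    field_simp
    ring

end AffineClassifier

open AffineClassifier

/-- disclosing only `A₋*` as negatives leaks no additional negative point:
any affine classifier positive on `S₊` and non-positive on `A₋*` is non-positive on
every `z ∈ S₋ \ A₋*`. -/
theorem stmt16 (n : ℕ) (Sp Sm : Finset (Fin n → ℝ)) (hsep : StrictSep n Sp Sm) :
    ∀ z ∈ (Sm : Set (Fin n → ℝ)) \ CritMinus n Sp Sm,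
      ∀ (c : Fin n → ℝ) (d : ℝ),
        (∀ x ∈ Sp, (∑ i, c i * x i) + d > 0) →
        (∀ y ∈ CritMinus n Sp Sm, (∑ i, c i * y i) + d ≤ 0) →
        (∑ i, c i * z i) + d ≤ 0 := by
  rintro z ⟨hz, -⟩ c d hpos hcrit
  obtain ⟨c₀, d₀, hpos₀, hneg₀⟩ := hsep
  by_contra! hfz
  obtain ⟨s, hs, hsep', hT⟩ := exists_weaklySeparates_add_smul hpos₀ hneg₀ hpos hz hfz
  obtain ⟨ys, hys, hysC⟩ := exists_mem_zeroSet_mem_critMinus hsep' hT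
  have hzero := (mem_zeroSet.1 hys).2
  rw [dotProduct_add_smul_add] at hzero
  have hf₀ : c₀ ⬝ᵥ ys + d₀ < 0 := hneg₀ ys hysC.1
  have hf : c ⬝ᵥ ys + d ≤ 0 := hcrit ys hysC
  nlinarith
end

section
/- Let $S_+, S_-$ be finite strictly linearly separable subsets of $\mathbb{R}^n$. The minimizer over pairs $(A_+, A_-)$ with $A_+ \subseteq S_+$, $A_- \subseteq S_-$ of $|\mathrm{Leak}(A_+, A_-) \cup A_+ \cup A_-|$ is attained at $(S_+, A_-^*)$, with minimum value $|S_+ \cup A_-^*|$. -/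
def aff (n : ℕ) (c : Fin n → ℝ) (d : ℝ) (x : Fin n → ℝ) : ℝ := (∑ i, c i * x i) + d

lemma aff_perturb (n : ℕ) (c : Fin n → ℝ) (d ε m : ℝ) (i : Fin n) (x : Fin n → ℝ) :
    aff n (fun j => c j + if j = i then ε else 0) (d - ε * m) x
      = aff n c d x + ε * (x i - m) := by
  unfold aff
  have h : ∑ j, (c j + if j = i then ε else 0) * x j
      = ∑ j, (c j * x j + if j = i then ε * x j else 0) :=
    Finset.sum_congr rfl fun j _ => by split <;> ring
  rw [h, Finset.sum_add_distrib, Finset.sum_ite_eq' Finset.univ i (fun j => ε * x j)]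
  simp only [Finset.mem_univ, if_true]
  ring

lemma critA (n : ℕ) (Sp Sm : Finset (Fin n → ℝ)) :
    ∀ T : Finset (Fin n → ℝ), T.Nonempty → T ⊆ Sm →
      ∀ c d, (∀ y ∈ T, aff n c d y = 0) → (∀ y ∈ Sm, y ∉ T → aff n c d y < 0) →
      (∀ x ∈ Sp, 0 < aff n c d x) → ∃ y ∈ T, y ∈ CritMinus n Sp Sm := by
  intro T
  induction T using Finset.strongInduction with
  | _ T ih =>
    intro hne hTS c d hT0 hneg hpos
    obtain ⟨y₁, hy₁⟩ := hne
    by_cases hT : ∀ y ∈ T, y = y₁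
    · refine ⟨y₁, hy₁, hTS hy₁, c, d, hT0 y₁ hy₁, ?_, hpos⟩
      intro y hy hne'
      by_cases hyT : y ∈ T
      · exact absurd (hT y hyT) hne'
      · exact hneg y hy hyT
    · push_neg at hT
      obtain ⟨y₂, hy₂, hy₂ne⟩ := hT
      obtain ⟨i, hi⟩ := Function.ne_iff.mp hy₂ne
      set m := T.sup' ⟨y₁, hy₁⟩ (fun y => y i) with hm
      set U := Sp ∪ (Sm \ T) with hU
      have hUabs : ∀ u ∈ U, 0 < |aff n c d u| := by
        intro u hu
        rcases Finset.mem_union.mp hu with h | h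
        · exact abs_pos.mpr (ne_of_gt (hpos u h))
        · obtain ⟨h1, h2⟩ := Finset.mem_sdiff.mp h
          exact abs_pos.mpr (ne_of_lt (hneg u h1 h2))
      set b : (Fin n → ℝ) → ℝ := fun u => |aff n c d u| / (|u i - m| + 1) with hb
      set ε := if hU' : U.Nonempty then U.inf' hU' b else 1 with hε
      have hεpos : 0 < ε := by
        rw [hε]; split
        · next hU' =>
          exact (Finset.lt_inf'_iff hU').mpr fun u hu =>
            div_pos (hUabs u hu) (by positivity)
        · exact one_pos
      have hεsmall : ∀ u ∈ U, ε * |u i - m| < |aff n c d u| := by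
        intro u hu
        have h1 : ε ≤ b u := by
          rw [hε, dif_pos ⟨u, hu⟩]; exact Finset.inf'_le _ hu
        have h2 : b u * |u i - m| < |aff n c d u| := by
          rw [hb]; dsimp only
          rw [div_mul_eq_mul_div, div_lt_iff₀ (by positivity)]
          have h3 := hUabs u hu
          nlinarith [abs_nonneg (u i - m)]
        calc ε * |u i - m| ≤ b u * |u i - m| :=
              mul_le_mul_of_nonneg_right h1 (abs_nonneg _)
          _ < _ := h2
      set T' := T.filter (fun y => y i = m) with hT'
      obtain ⟨ymax, hymaxT, hymax⟩ := Finset.exists_mem_eq_sup' ⟨y₁, hy₁⟩ (fun y => y i)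
      have hT'ne : T'.Nonempty := ⟨ymax, Finset.mem_filter.mpr ⟨hymaxT, hymax.symm⟩⟩
      have hle : ∀ y ∈ T, y i ≤ m := fun y hy => Finset.le_sup' (fun z => z i) hy
      have hssub : T' ⊂ T := by
        refine (Finset.ssubset_iff_of_subset (Finset.filter_subset _ _)).mpr ?_
        by_cases h1 : y₁ i = m
        · exact ⟨y₂, hy₂, fun hmem => hi ((Finset.mem_filter.mp hmem).2.trans h1.symm)⟩
        · exact ⟨y₁, hy₁, fun hmem => h1 (Finset.mem_filter.mp hmem).2⟩
      set c' := fun j => c j + if j = i then ε else 0 with hc'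
      set d' := d - ε * m with hd'
      have haff' : ∀ x, aff n c' d' x = aff n c d x + ε * (x i - m) :=
        fun x => aff_perturb n c d ε m i x
      have h0' : ∀ y ∈ T', aff n c' d' y = 0 := by
        intro y hy
        obtain ⟨hyT, hyi⟩ := Finset.mem_filter.mp hy
        rw [haff', hT0 y hyT, hyi]; ring
      have hneg' : ∀ y ∈ Sm, y ∉ T' → aff n c' d' y < 0 := by
        intro y hySm hyT'
        rw [haff']
        by_cases hyT : y ∈ T
        · have h1 : y i ≠ m := fun h => hyT' (Finset.mem_filter.mpr ⟨hyT, h⟩)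
          have h2 : y i ≤ m := hle y hyT
          rw [hT0 y hyT]
          have h3 : y i - m < 0 := sub_neg.mpr (lt_of_le_of_ne h2 h1)
          nlinarith
        · have hyU : y ∈ U := Finset.mem_union_right _ (Finset.mem_sdiff.mpr ⟨hySm, hyT⟩)
          have h1 := hεsmall y hyU
          have h2 : aff n c d y < 0 := hneg y hySm hyT
          rw [abs_of_neg h2] at h1
          have h3 : ε * (y i - m) ≤ ε * |y i - m| :=
            mul_le_mul_of_nonneg_left (le_abs_self _) hεpos.le
          linarith
      have hpos' : ∀ x ∈ Sp, 0 < aff n c' d' x := by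
        intro x hx
        rw [haff']
        have h1 := hεsmall x (Finset.mem_union_left _ hx)
        have h2 := hpos x hx
        rw [abs_of_pos h2] at h1
        have h3 : -(ε * |x i - m|) ≤ ε * (x i - m) := by
          have h4 := neg_abs_le (x i - m)
          nlinarith
        linarith
      obtain ⟨y, hyT', hyC⟩ := ih T' hssub hT'ne ((Finset.filter_subset _ _).trans hTS)
        c' d' h0' hneg' hpos'
      exact ⟨y, Finset.filter_subset _ _ hyT', hyC⟩

lemma aff_combo (n : ℕ) (c₀ c : Fin n → ℝ) (d₀ d t : ℝ) (x : Fin n → ℝ) :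
    aff n (fun j => c₀ j + t * (c j - c₀ j)) (d₀ + t * (d - d₀)) x
      = aff n c₀ d₀ x + t * (aff n c d x - aff n c₀ d₀ x) := by
  unfold aff
  have h : ∑ i, (c₀ i + t * (c i - c₀ i)) * x i
      = ∑ i, (c₀ i * x i + (t * (c i * x i) - t * (c₀ i * x i))) :=
    Finset.sum_congr rfl fun i _ => by ring
  rw [h, Finset.sum_add_distrib, Finset.sum_sub_distrib, ← Finset.mul_sum, ← Finset.mul_sum]
  ring

lemma critB (n : ℕ) (Sp Sm : Finset (Fin n → ℝ)) (hsep : StrictSep n Sp Sm)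
    (c : Fin n → ℝ) (d : ℝ) (hpos : ∀ x ∈ Sp, 0 < aff n c d x)
    (z : Fin n → ℝ) (hz : z ∈ Sm) (hzpos : 0 < aff n c d z) :
    ∃ y ∈ CritMinus n Sp Sm, 0 < aff n c d y := by
  obtain ⟨c₀, d₀, hp₀, hm₀⟩ := hsep
  have hp₀' : ∀ x ∈ Sp, 0 < aff n c₀ d₀ x := hp₀
  have hm₀' : ∀ y ∈ Sm, aff n c₀ d₀ y < 0 := hm₀
  set B := Sm.filter (fun y => 0 < aff n c d y) with hB
  have hzB : z ∈ B := Finset.mem_filter.mpr ⟨hz, hzpos⟩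
  have hBne : B.Nonempty := ⟨z, hzB⟩
  set lam : (Fin n → ℝ) → ℝ :=
    fun y => -aff n c₀ d₀ y / (aff n c d y - aff n c₀ d₀ y) with hlam
  have hDpos : ∀ y ∈ B, 0 < aff n c d y - aff n c₀ d₀ y := by
    intro y hy
    obtain ⟨h1, h2⟩ := Finset.mem_filter.mp hy
    have h3 := hm₀' y h1
    linarith
  have hlam01 : ∀ y ∈ B, 0 < lam y ∧ lam y < 1 := by
    intro y hy
    obtain ⟨h1, h2⟩ := Finset.mem_filter.mp hy
    have h3 := hm₀' y h1
    have hD := hDpos y hy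
    refine ⟨div_pos (by linarith) hD, ?_⟩
    rw [hlam]; dsimp only
    rw [div_lt_one hD]; linarith
  have hlamD : ∀ y ∈ B, lam y * (aff n c d y - aff n c₀ d₀ y) = -aff n c₀ d₀ y :=
    fun y hy => div_mul_cancel₀ _ (ne_of_gt (hDpos y hy))
  set lamS := B.inf' hBne lam with hlamS
  have hlamSpos : 0 < lamS :=
    (Finset.lt_inf'_iff hBne).mpr fun y hy => (hlam01 y hy).1
  have hlamSlt1 : lamS < 1 :=
    lt_of_le_of_lt (Finset.inf'_le _ hzB) (hlam01 z hzB).2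
  set c' := fun j => c₀ j + lamS * (c j - c₀ j) with hc'
  set d' := d₀ + lamS * (d - d₀) with hd'
  have haff' : ∀ x, aff n c' d' x
      = aff n c₀ d₀ x + lamS * (aff n c d x - aff n c₀ d₀ x) :=
    fun x => aff_combo n c₀ c d₀ d lamS x
  have hle0 : ∀ y ∈ Sm, aff n c' d' y ≤ 0 := by
    intro y hySm
    rw [haff']
    by_cases hyB : y ∈ B
    · have hD := hDpos y hyB
      have h1 : lamS ≤ lam y := Finset.inf'_le _ hyB
      have h2 := hlamD y hyB
      have h3 : lamS * (aff n c d y - aff n c₀ d₀ y)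
          ≤ lam y * (aff n c d y - aff n c₀ d₀ y) :=
        mul_le_mul_of_nonneg_right h1 hD.le
      linarith
    · have h1 : aff n c d y ≤ 0 := by
        by_contra h
        exact hyB (Finset.mem_filter.mpr ⟨hySm, lt_of_not_ge h⟩)
      have h2 := hm₀' y hySm
      nlinarith [mul_pos (sub_pos.mpr hlamSlt1) (neg_pos.mpr h2),
        mul_nonneg hlamSpos.le (neg_nonneg.mpr h1)]
  have hposS : ∀ x ∈ Sp, 0 < aff n c' d' x := by
    intro x hx
    rw [haff']
    have h1 := hp₀' x hx
    have h2 := hpos x hx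
    nlinarith [mul_pos hlamSpos h2, mul_pos (sub_pos.mpr hlamSlt1) h1]
  set T := Sm.filter (fun y => aff n c' d' y = 0) with hT
  obtain ⟨y₀, hy₀B, hy₀⟩ := Finset.exists_mem_eq_inf' hBne lam
  have hy₀Sm : y₀ ∈ Sm := (Finset.mem_filter.mp hy₀B).1
  have hy₀T : y₀ ∈ T := by
    refine Finset.mem_filter.mpr ⟨hy₀Sm, ?_⟩
    rw [haff']
    have h2 := hlamD y₀ hy₀B
    rw [← hy₀] at h2
    linarith
  obtain ⟨ys, hysT, hysC⟩ := critA n Sp Sm T ⟨y₀, hy₀T⟩ (Finset.filter_subset _ _) c' d'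
    (fun y hy => (Finset.mem_filter.mp hy).2)
    (fun y hySm hyT => lt_of_le_of_ne (hle0 y hySm)
      (fun h => hyT (Finset.mem_filter.mpr ⟨hySm, h⟩)))
    hposS
  refine ⟨ys, hysC, ?_⟩
  have hysSm : ys ∈ Sm := (Finset.mem_filter.mp hysT).1
  have h0 : aff n c' d' ys = 0 := (Finset.mem_filter.mp hysT).2
  rw [haff'] at h0
  have h2 := hm₀' ys hysSm
  by_contra hcon
  push_neg at hcon
  nlinarith [mul_pos (sub_pos.mpr hlamSlt1) (neg_pos.mpr h2),
    mul_nonneg hlamSpos.le (neg_nonneg.mpr hcon)]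

lemma aff_shift (n : ℕ) (c : Fin n → ℝ) (d ε : ℝ) (x : Fin n → ℝ) :
    aff n c (d + ε) x = aff n c d x + ε := by unfold aff; ring

/-- the minimum of `|Leak(A₊,A₋) ∪ A₊ ∪ A₋|` over `A₊ ⊆ S₊`, `A₋ ⊆ S₋`
is attained at `(S₊, A₋*)`, with value `|S₊ ∪ A₋*|`. -/
theorem stmt17 (n : ℕ) (Sp Sm : Finset (Fin n → ℝ)) (hsep : StrictSep n Sp Sm) :
    (∀ Ap Am : Finset (Fin n → ℝ), Ap ⊆ Sp → Am ⊆ Sm →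
      ((Sp : Set (Fin n → ℝ)) ∪ CritMinus n Sp Sm).ncard ≤
        (Leak n Sp Sm Ap Am ∪ ↑Ap ∪ ↑Am).ncard) ∧
    (∀ Am : Finset (Fin n → ℝ), (Am : Set (Fin n → ℝ)) = CritMinus n Sp Sm →
      Leak n Sp Sm Sp Am ∪ ↑Sp ∪ ↑Am = (Sp : Set (Fin n → ℝ)) ∪ CritMinus n Sp Sm) := by
  obtain ⟨c₀, d₀, hp₀, hm₀⟩ := hsep
  constructor
  · intro Ap Am hAp hAm
    have hsubset : ((Sp : Set (Fin n → ℝ)) ∪ CritMinus n Sp Sm)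
        ⊆ (Leak n Sp Sm Ap Am ∪ ↑Ap ∪ ↑Am) := by
      rintro w (hw | hw)
      · -- w ∈ Sp : always leaks via the separator
        refine Or.inl (Or.inl ?_)
        refine ⟨Or.inl hw, c₀, d₀, fun x hx => hp₀ x (hAp hx),
          fun y hy => hm₀ y (hAm hy), hp₀ w hw⟩
      · -- w ∈ CritMinus
        by_cases hwAm : w ∈ Am
        · exact Or.inr hwAm
        · obtain ⟨hwSm, c, d, h0, hneg, hpos⟩ := hw
          refine Or.inl (Or.inl ?_)
          have h0' : aff n c d w = 0 := h0
          have hneg' : ∀ y ∈ Sm, y ≠ w → aff n c d y < 0 := hneg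
          have hpos' : ∀ x ∈ Sp, 0 < aff n c d x := hpos
          set ε := if h : Am.Nonempty then (Am.inf' h (fun y => -(aff n c d y))) / 2
            else 1 with hε
          have hAmneg : ∀ y ∈ Am, aff n c d y < 0 := by
            intro y hy
            exact hneg' y (hAm hy) (fun h => hwAm (h ▸ hy))
          have hεpos : 0 < ε := by
            rw [hε]; split
            · next h =>
              have : ∀ y ∈ Am, 0 < -(aff n c d y) := fun y hy => by
                have := hAmneg y hy; linarith
              have h2 : 0 < Am.inf' h (fun y => -(aff n c d y)) :=
                (Finset.lt_inf'_iff h).mpr this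
              linarith
            · exact one_pos
          have hεAm : ∀ y ∈ Am, aff n c d y + ε < 0 := by
            intro y hy
            have h1 : ε ≤ (-(aff n c d y)) / 2 := by
              rw [hε, dif_pos ⟨y, hy⟩]
              have := Finset.inf'_le (fun y => -(aff n c d y)) hy
              linarith
            have := hAmneg y hy
            linarith
          refine ⟨Or.inr hwSm, c, d + ε, ?_, ?_, ?_⟩
          · intro x hx
            have h1 : aff n c (d + ε) x = aff n c d x + ε := aff_shift n c d ε x
            have h2 := hpos' x (hAp hx)
            show (0 : ℝ) < _
            calc (0:ℝ) < aff n c d x + ε := by linarith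
              _ = aff n c (d + ε) x := (aff_shift n c d ε x).symm
          · intro y hy
            show _ < (0 : ℝ)
            calc aff n c (d + ε) y = aff n c d y + ε := aff_shift n c d ε y
              _ < 0 := hεAm y hy
          · show (0 : ℝ) < _
            calc (0:ℝ) < aff n c d w + ε := by rw [h0']; linarith
              _ = aff n c (d + ε) w := (aff_shift n c d ε w).symm
    have hfin : (Leak n Sp Sm Ap Am ∪ ↑Ap ∪ ↑Am).Finite := by
      refine Set.Finite.subset
        (((Sp.finite_toSet.union Sm.finite_toSet).union Ap.finite_toSet).union
          Am.finite_toSet) ?_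
      rintro w ((h | h) | h)
      · exact Or.inl (Or.inl h.1)
      · exact Or.inl (Or.inr h)
      · exact Or.inr h
    exact Set.ncard_le_ncard hsubset hfin
  · intro Am hAm
    apply Set.Subset.antisymm
    · rintro w ((hL | hSp) | hAm')
      · obtain ⟨hw, c, d, hp, hm, hwpos⟩ := hL
        rcases hw with hwSp | hwSm
        · exact Or.inl hwSp
        · exfalso
          have hp' : ∀ x ∈ Sp, 0 < aff n c d x := hp
          have hwpos' : 0 < aff n c d w := hwpos
          have hwSm' : w ∈ Sm := hwSm
          obtain ⟨ys, hysC, hyspos⟩ := critB n Sp Sm ⟨c₀, d₀, hp₀, hm₀⟩ c d hp' w hwSm' hwpos'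
          have hysAm : ys ∈ Am := by
            rw [← hAm] at hysC; exact hysC
          have := hm ys hysAm
          have h2 : aff n c d ys < 0 := this
          linarith
      · exact Or.inl hSp
      · exact Or.inr (hAm ▸ hAm')
    · rintro w (hw | hw)
      · exact Or.inl (Or.inr hw)
      · exact Or.inr (by rw [hAm]; exact hw)
end
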